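/- arXiv:1605.01995 — 13 statements merged into one kernel-verified Lean document; each statement's English description precedes it below -/
import Mathlib

section
/- For any Kripke model M, world s, and formulas φ, ψ, the almost-definability schema holds: if ¬Δψ is true at s (i.e., there exist two successors of s disagreeing on ψ), then □φ is true at s if and only if both Δφ and Δ(ψ→φ) are true at s. -/
/-- Box semantics: φ holds at all R-successors of s. -/
def box {S : Type*} (R : S → S → Prop) (φ : S → Prop) (s : S) : Prop :=
  ∀ t, R s t → φ t

/-- Δ (knowing whether) semantics: all R-successors of s agree on φ. -/
def delta {S : Type*} (R : S → S → Prop) (φ : S → Prop) (s : S) : Prop :=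
  (∀ t, R s t → φ t) ∨ (∀ t, R s t → ¬ φ t)

/-!
If every successor of `s` refutes `φ`, then `ψ → φ` is equivalent to `¬ψ` on the successors,
so `Δ(ψ → φ)` says the same as `Δψ`. Hence under `¬Δψ`, the conjunction `Δφ ∧ Δ(ψ → φ)` rules
out the negative half of `Δφ` and leaves `□φ`; the converse is immediate.
-/

section

variable {S : Type*} {R : S → S → Prop} {φ ψ : S → Prop} {s : S}

theorem delta_of_box (h : box R φ s) : delta R φ s :=
  Or.inl h

theorem box_imp_of_box (h : box R φ s) : box R (fun t => ψ t → φ t) s :=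
  fun t ht _ => h t ht

theorem delta_congr (h : ∀ t, R s t → (φ t ↔ ψ t)) : delta R φ s ↔ delta R ψ s :=
  or_congr (forall₂_congr h) (forall₂_congr fun t ht => not_congr (h t ht))

theorem delta_not : delta R (fun t => ¬ φ t) s ↔ delta R φ s := by
  simp only [delta, not_not, or_comm]

theorem delta_imp_iff_of_box_not (h : box R (fun t => ¬ φ t) s) :
    delta R (fun t => ψ t → φ t) s ↔ delta R ψ s :=
  (delta_congr fun t ht => by simp only [h t ht, imp_false]).trans delta_not

end

/-- Almost-definability schema: if ¬Δψ at s, then □φ ↔ (Δφ ∧ Δ(ψ→φ)) at s. -/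
theorem almost_definability {S : Type*} (R : S → S → Prop) (φ ψ : S → Prop) (s : S)
    (h : ¬ delta R ψ s) :
    box R φ s ↔ (delta R φ s ∧ delta R (fun t => ψ t → φ t) s) := by
  refine ⟨fun hφ => ⟨delta_of_box hφ, delta_of_box (box_imp_of_box hφ)⟩, ?_⟩
  rintro ⟨hφ | hnφ, himp⟩
  · exact hφ
  · exact absurd ((delta_imp_iff_of_box_not hnφ).1 himp) h
end

section
/- The axiom KwCon is valid: for any Kripke model M and world s, if Δ(q→p) and Δ(¬q→p) hold at s, then Δp holds at s. -/
theorem forall_not_of_forall_not_imp {S : Type*} {R : S → S → Prop} {p ψ : S → Prop} {s : S}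
    (h : ∀ t, R s t → ¬ (ψ t → p t)) : ∀ t, R s t → ¬ p t :=
  fun t ht hp => h t ht fun _ => hp

/-- KwCon: Δ(q→p) ∧ Δ(¬q→p) → Δp is valid. -/
theorem kwCon_valid {S : Type*} (R : S → S → Prop) (p q : S → Prop) (s : S)
    (h1 : delta R (fun t => q t → p t) s) (h2 : delta R (fun t => ¬ q t → p t) s) :
    delta R p s := by
  rcases h1 with h1 | h1
  · rcases h2 with h2 | h2
    · exact Or.inl fun t ht => (em (q t)).elim (h1 t ht) (h2 t ht)
    · exact Or.inr (forall_not_of_forall_not_imp h2)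
  · exact Or.inr (forall_not_of_forall_not_imp h1)
end

section
/- There exist a Kripke model M, a world s and formulas φ, ψ falsifying Δ(φ→ψ) ∧ Δφ → Δψ, so this schema is NOT valid in general; however, Δ(φ↔ψ) ∧ Δφ → Δψ IS valid, i.e. for any Kripke model M and world s, if Δ(φ↔ψ) and Δφ hold at s, then Δψ holds at s. -/
/-- Δ(φ→ψ) ∧ Δφ → Δψ is NOT valid (there is a falsifying model, world, and formulas),
but Δ(φ↔ψ) ∧ Δφ → Δψ IS valid. -/
theorem delta_iff_valid_imp_invalid :
    (∃ (S : Type) (R : S → S → Prop) (φ ψ : S → Prop) (s : S),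
      delta R (fun t => φ t → ψ t) s ∧ delta R φ s ∧ ¬ delta R ψ s) ∧
    (∀ (S : Type) (R : S → S → Prop) (φ ψ : S → Prop) (s : S),
      delta R (fun t => φ t ↔ ψ t) s → delta R φ s → delta R ψ s) := by
  constructor
  · refine ⟨Bool, fun _ _ => True, fun _ => False, fun b => b = true, true, ?_, ?_, ?_⟩
    · left; intro t _ h; exact h.elim
    · right; intro t _ h; exact h
    · rintro (h | h)
      · exact absurd (h false trivial) (by simp)
      · exact h true trivial rfl
  · rintro S R φ ψ s (hiff | hiff) (hφ | hφ)
    · left; intro t ht; exact (hiff t ht).1 (hφ t ht)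
    · right; intro t ht hψ; exact hφ t ht ((hiff t ht).2 hψ)
    · right; intro t ht hψ; exact hiff t ht ⟨fun _ => hψ, fun _ => hφ t ht⟩
    · left; intro t ht
      by_contra hψ
      exact hiff t ht ⟨fun h => absurd h (hφ t ht), fun h => absurd h hψ⟩
end

section
/- Δ-bisimilarity implies NCL-equivalence: if Z is a Δ-bisimulation on (the disjoint union of) two Kripke models M and N with (s,t) ∈ Z, then M,s and N,t satisfy exactly the same formulas of the language built from propositional atoms, negation, conjunction, and the Δ operator. -/
/-- Formulas of the knowing-whether language NCL: atoms, ¬, ∧, Δ. -/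
inductive NCLForm where
  | atom : ℕ → NCLForm
  | neg : NCLForm → NCLForm
  | conj : NCLForm → NCLForm → NCLForm
  | delta : NCLForm → NCLForm

/-- Satisfaction in a Kripke model (S, R, V). -/
def nclSat {S : Type*} (R : S → S → Prop) (V : ℕ → S → Prop) : NCLForm → S → Prop
  | .atom n => fun s => V n s
  | .neg φ => fun s => ¬ nclSat R V φ s
  | .conj φ ψ => fun s => nclSat R V φ s ∧ nclSat R V ψ s
  | .delta φ => fun s =>
      (∀ t, R s t → nclSat R V φ t) ∨ (∀ t, R s t → ¬ nclSat R V φ t)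

/-- Z is a Δ-bisimulation on the model (S, R, V). -/
def DeltaBisim {S : Type*} (R : S → S → Prop) (V : ℕ → S → Prop)
    (Z : S → S → Prop) : Prop :=
  (∃ a b, Z a b) ∧
  ∀ s s', Z s s' →
    ((∀ n, V n s ↔ V n s') ∧
     ((∃ t1 t2, R s t1 ∧ R s t2 ∧ ¬ Z t1 t2) →
        ∀ t, R s t → ∃ t', R s' t' ∧ Z t t') ∧
     ((∃ t1' t2', R s' t1' ∧ R s' t2' ∧ ¬ Z t1' t2') →
        ∀ t', R s' t' → ∃ t, R s t ∧ Z t t'))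

/-- Disjoint union of the accessibility relations of two models. -/
def unionRel {S T : Type*} (R1 : S → S → Prop) (R2 : T → T → Prop) :
    S ⊕ T → S ⊕ T → Prop
  | .inl a, .inl b => R1 a b
  | .inr a, .inr b => R2 a b
  | _, _ => False

/-- Disjoint union of the valuations of two models. -/
def unionVal {S T : Type*} (V1 : ℕ → S → Prop) (V2 : ℕ → T → Prop)
    (n : ℕ) : S ⊕ T → Prop
  | .inl a => V1 n a
  | .inr b => V2 n b

/-!
Truth of NCL formulas is invariant under a Δ-bisimulation `Z`. The only nontrivial case is `Δφ` at
`Z u v`: if the successors of `v` are pairwise `Z`-related they agree on `φ` by the induction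
hypothesis, whatever happens at `u`; otherwise the back clause matches every successor of `v` with a
`Z`-related successor of `u`, so agreement at `u` carries over. Finally, both components embed into
the disjoint union as bounded morphisms, which preserve truth.
-/

theorem DeltaBisim.symm {S : Type*} {R : S → S → Prop} {V : ℕ → S → Prop} {Z : S → S → Prop}
    (hZ : DeltaBisim R V Z) : DeltaBisim R V (flip Z) := by
  obtain ⟨⟨a, b, hab⟩, hstep⟩ := hZ
  refine ⟨⟨b, a, hab⟩, fun s s' h => ?_⟩
  obtain ⟨hV, hforth, hback⟩ := hstep s' s h
  refine ⟨fun n => (hV n).symm, ?_, ?_⟩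
  · rintro ⟨t1, t2, h1, h2, h12⟩
    exact hback ⟨t2, t1, h2, h1, h12⟩
  · rintro ⟨t1, t2, h1, h2, h12⟩
    exact hforth ⟨t2, t1, h2, h1, h12⟩

section Agreement

variable {S : Type*} {R : S → S → Prop} {Z : S → S → Prop} {P : S → Prop}

def SuccAgree (R : S → S → Prop) (P : S → Prop) (s : S) : Prop :=
  (∀ t, R s t → P t) ∨ (∀ t, R s t → ¬ P t)

theorem succAgree_of_pairwise {v : S} (hP : ∀ a b, Z a b → (P a ↔ P b))
    (hpair : ∀ t1 t2, R v t1 → R v t2 → Z t1 t2) : SuccAgree R P v := by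
  by_cases h : ∃ t0, R v t0 ∧ P t0
  · obtain ⟨t0, hvt0, ht0⟩ := h
    exact .inl fun t hvt => (hP t t0 (hpair t t0 hvt hvt0)).2 ht0
  · push Not at h
    exact .inr h

theorem SuccAgree.of_back {u v : S} (hP : ∀ a b, Z a b → (P a ↔ P b))
    (hback : (∃ t1 t2, R v t1 ∧ R v t2 ∧ ¬ Z t1 t2) → ∀ t', R v t' → ∃ t, R u t ∧ Z t t')
    (hu : SuccAgree R P u) : SuccAgree R P v := by
  by_cases hsplit : ∃ t1 t2, R v t1 ∧ R v t2 ∧ ¬ Z t1 t2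
  · have hmatch := hback hsplit
    rcases hu with hall | hnone
    · refine .inl fun t' hvt' => ?_
      obtain ⟨t, hut, htt'⟩ := hmatch t' hvt'
      exact (hP t t' htt').1 (hall t hut)
    · refine .inr fun t' hvt' ht' => ?_
      obtain ⟨t, hut, htt'⟩ := hmatch t' hvt'
      exact hnone t hut ((hP t t' htt').2 ht')
  · push Not at hsplit
    exact succAgree_of_pairwise hP hsplit

end Agreement

theorem nclSat_delta {S : Type*} (R : S → S → Prop) (V : ℕ → S → Prop) (φ : NCLForm) (s : S) :
    nclSat R V (.delta φ) s ↔ SuccAgree R (nclSat R V φ) s :=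
  Iff.rfl

theorem DeltaBisim.nclSat_iff {S : Type*} {R : S → S → Prop} {V : ℕ → S → Prop}
    {Z : S → S → Prop} (hZ : DeltaBisim R V Z) (φ : NCLForm) {u v : S} (huv : Z u v) :
    nclSat R V φ u ↔ nclSat R V φ v := by
  induction φ generalizing u v with
  | atom n => exact (hZ.2 u v huv).1 n
  | neg φ ih => exact not_congr (ih huv)
  | conj φ ψ ihφ ihψ => exact and_congr (ihφ huv) (ihψ huv)
  | delta φ ih =>
    rw [nclSat_delta, nclSat_delta]
    exact ⟨SuccAgree.of_back (fun _ _ h => ih h) (hZ.2 u v huv).2.2,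
      SuccAgree.of_back (fun _ _ h => (ih h).symm) (hZ.symm.2 v u huv).2.2⟩

structure IsBoundedMorphism {S S' : Type*} (R : S → S → Prop) (V : ℕ → S → Prop)
    (R' : S' → S' → Prop) (V' : ℕ → S' → Prop) (f : S → S') : Prop where
  forth : ∀ a b, R a b → R' (f a) (f b)
  back : ∀ a y, R' (f a) y → ∃ b, R a b ∧ f b = y
  val : ∀ n a, V' n (f a) ↔ V n a

namespace IsBoundedMorphism

variable {S S' : Type*} {R : S → S → Prop} {V : ℕ → S → Prop} {R' : S' → S' → Prop}
  {V' : ℕ → S' → Prop} {f : S → S'}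

theorem forall_succ_iff (hf : IsBoundedMorphism R V R' V' f) (Q : S' → Prop) (a : S) :
    (∀ y, R' (f a) y → Q y) ↔ ∀ b, R a b → Q (f b) := by
  refine ⟨fun h b hab => h (f b) (hf.forth a b hab), fun h y hy => ?_⟩
  obtain ⟨b, hab, rfl⟩ := hf.back a y hy
  exact h b hab

theorem nclSat_iff (hf : IsBoundedMorphism R V R' V' f) (φ : NCLForm) (a : S) :
    nclSat R' V' φ (f a) ↔ nclSat R V φ a := by
  induction φ generalizing a with
  | atom n => exact hf.val n a
  | neg φ ih => exact not_congr (ih a)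
  | conj φ ψ ihφ ihψ => exact and_congr (ihφ a) (ihψ a)
  | delta φ ih =>
    simp only [nclSat_delta, SuccAgree, hf.forall_succ_iff, ih]

end IsBoundedMorphism

section DisjointUnion

variable {S T : Type*} (R1 : S → S → Prop) (V1 : ℕ → S → Prop) (R2 : T → T → Prop)
  (V2 : ℕ → T → Prop)

theorem isBoundedMorphism_inl :
    IsBoundedMorphism R1 V1 (unionRel R1 R2) (unionVal V1 V2) Sum.inl where
  forth _ _ h := h
  back _
    | .inl b, h => ⟨b, h, rfl⟩
    | .inr _, h => h.elim
  val _ _ := Iff.rfl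

theorem isBoundedMorphism_inr :
    IsBoundedMorphism R2 V2 (unionRel R1 R2) (unionVal V1 V2) Sum.inr where
  forth _ _ h := h
  back _
    | .inl _, h => h.elim
    | .inr b, h => ⟨b, h, rfl⟩
  val _ _ := Iff.rfl

end DisjointUnion

/-- Δ-bisimilarity implies NCL-equivalence: if Z is a Δ-bisimulation on the
disjoint union of M = (S,R1,V1) and N = (T,R2,V2) with (inl s, inr t) ∈ Z, then
M,s and N,t satisfy exactly the same NCL formulas. -/
theorem deltaBisim_ncl_equiv {S T : Type*}
    (R1 : S → S → Prop) (V1 : ℕ → S → Prop)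
    (R2 : T → T → Prop) (V2 : ℕ → T → Prop)
    (Z : S ⊕ T → S ⊕ T → Prop)
    (hZ : DeltaBisim (unionRel R1 R2) (unionVal V1 V2) Z)
    (s : S) (t : T) (hst : Z (.inl s) (.inr t)) :
    ∀ φ : NCLForm, nclSat R1 V1 φ s ↔ nclSat R2 V2 φ t := by
  intro φ
  rw [← (isBoundedMorphism_inl R1 V1 R2 V2).nclSat_iff,
    ← (isBoundedMorphism_inr R1 V1 R2 V2).nclSat_iff]
  exact hZ.nclSat_iff φ hst
end

section
/- On reflexive Kripke models, the translation t'(□φ) = t'(φ) ∧ Δt'(φ) is correct: for every modal formula φ and every pointed reflexive model (M,s), M,s ⊨ φ iff M,s ⊨ t'(φ), where t' commutes with atoms and Boolean connectives and maps □ψ to t'(ψ) ∧ Δt'(ψ). -/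
/-- Standard modal formulas: atoms, ¬, ∧, □. -/
inductive MLForm where
  | atom : ℕ → MLForm
  | neg : MLForm → MLForm
  | conj : MLForm → MLForm → MLForm
  | box : MLForm → MLForm

/-- Satisfaction for the □ language. -/
def mlSat {S : Type*} (R : S → S → Prop) (V : ℕ → S → Prop) : MLForm → S → Prop
  | .atom n => fun s => V n s
  | .neg φ => fun s => ¬ mlSat R V φ s
  | .conj φ ψ => fun s => mlSat R V φ s ∧ mlSat R V ψ s
  | .box φ => fun s => ∀ t, R s t → mlSat R V φ t

/-- The translation t' : ML → NCL commuting with atoms and Booleans,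
with t'(□φ) = t'(φ) ∧ Δ t'(φ). -/
def tr : MLForm → NCLForm
  | .atom n => .atom n
  | .neg φ => .neg (tr φ)
  | .conj φ ψ => .conj (tr φ) (tr ψ)
  | .box φ => .conj (tr φ) (.delta (tr φ))

theorem and_delta_iff_forall {S : Type*} {R : S → S → Prop} {s : S} (hs : R s s) (P : S → Prop) :
    (P s ∧ ((∀ t, R s t → P t) ∨ (∀ t, R s t → ¬ P t))) ↔ ∀ t, R s t → P t := by
  refine ⟨?_, fun h => ⟨h s hs, Or.inl h⟩⟩
  rintro ⟨hPs, hall | hnone⟩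
  · exact hall
  · exact absurd hPs (hnone s hs)

/-- On reflexive models the translation is correct: M,s ⊨ φ iff M,s ⊨ t'(φ). -/
theorem tr_correct_reflexive {S : Type*} (R : S → S → Prop) (hrefl : ∀ s, R s s)
    (V : ℕ → S → Prop) (φ : MLForm) (s : S) :
    mlSat R V φ s ↔ nclSat R V (tr φ) s := by
  induction φ generalizing s with
  | atom n => rfl
  | neg φ ih => exact not_congr (ih s)
  | conj φ ψ ihφ ihψ => exact and_congr (ihφ s) (ihψ s)
  | box φ ih =>
    have ih' : nclSat R V (tr φ) = mlSat R V φ := funext fun t => propext (ih t).symm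
    simp only [mlSat, tr, nclSat, ih']
    exact (and_delta_iff_forall (hrefl s) (mlSat R V φ)).symm
end

section
/- Reflexivity is not frame-definable in the language of knowing whether: there is no set Γ of formulas in the Δ-only modal language such that a frame validates Γ iff it is reflexive. Witness: the frame F1 with three worlds s→t→u (and no other arrows) and the frame F2 with a single reflexive world validate exactly the same Δ-formulas, but F1 is not reflexive while F2 is. -/
/-- A frame (S,R) validates φ: φ is true at every world under every valuation. -/
def frameValid {S : Type*} (R : S → S → Prop) (φ : NCLForm) : Prop :=
  ∀ (V : ℕ → S → Prop) (s : S), nclSat R V φ s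

/-- The frame F1: three worlds s → t → u, no other arrows. -/
def R1 : Fin 3 → Fin 3 → Prop := fun a b => (a = 0 ∧ b = 1) ∨ (a = 1 ∧ b = 2)

/-- The frame F2: a single reflexive world. -/
def R2 : Unit → Unit → Prop := fun _ _ => True

def propEval (b : ℕ → Prop) : NCLForm → Prop
  | .atom n => b n
  | .neg φ => ¬ propEval b φ
  | .conj φ ψ => propEval b φ ∧ propEval b ψ
  | .delta _ => True

section RightUnique

variable {S : Type*} {R : S → S → Prop}

theorem nclSat_delta_of_rightUnique (hR : Relator.RightUnique R) (V : ℕ → S → Prop)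
    (φ : NCLForm) (s : S) : nclSat R V (.delta φ) s := by
  by_cases hall : ∀ t, R s t → nclSat R V φ t
  · exact Or.inl hall
  · push Not at hall
    obtain ⟨t, hst, hnt⟩ := hall
    exact Or.inr fun t' hst' => hR hst hst' ▸ hnt

theorem nclSat_iff_propEval_of_rightUnique (hR : Relator.RightUnique R) (V : ℕ → S → Prop)
    (φ : NCLForm) (s : S) : nclSat R V φ s ↔ propEval (fun n => V n s) φ := by
  induction φ with
  | atom n => rfl
  | neg φ ih => exact not_congr ih
  | conj φ ψ ihφ ihψ => exact and_congr ihφ ihψ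
  | delta φ => exact iff_true_intro (nclSat_delta_of_rightUnique hR V φ s)

theorem frameValid_iff_of_rightUnique [Nonempty S] (hR : Relator.RightUnique R) (φ : NCLForm) :
    frameValid R φ ↔ ∀ b : ℕ → Prop, propEval b φ := by
  simp only [frameValid, nclSat_iff_propEval_of_rightUnique hR]
  exact ⟨fun h b => h (fun n _ => b n) (Classical.arbitrary S), fun h V s => h _⟩

end RightUnique

theorem rightUnique_R1 : Relator.RightUnique R1 := by
  rintro a b c (⟨rfl, rfl⟩ | ⟨rfl, rfl⟩) (⟨h, rfl⟩ | ⟨h, rfl⟩) <;> simp_all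

theorem rightUnique_R2 : Relator.RightUnique R2 := fun _ _ _ _ _ => rfl

theorem frameValid_R1_iff_frameValid_R2 (φ : NCLForm) : frameValid R1 φ ↔ frameValid R2 φ := by
  rw [frameValid_iff_of_rightUnique rightUnique_R1, frameValid_iff_of_rightUnique rightUnique_R2]

theorem not_reflexive_R1 : ¬ ∀ s, R1 s s := by
  intro h
  rcases h 0 with ⟨_, h01⟩ | ⟨h01, _⟩ <;> exact absurd h01 (by decide)

theorem not_frameDefinable_of_frameValid_iff (P : ∀ S : Type, (S → S → Prop) → Prop)
    {S T : Type} {R : S → S → Prop} {Q : T → T → Prop}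
    (hvalid : ∀ φ, frameValid R φ ↔ frameValid Q φ) (hR : ¬ P S R) (hQ : P T Q) :
    ¬ ∃ Γ : Set NCLForm, ∀ (S : Type) (R : S → S → Prop), (∀ φ ∈ Γ, frameValid R φ) ↔ P S R := by
  rintro ⟨Γ, hΓ⟩
  exact hR <| (hΓ S R).mp fun φ hφ => (hvalid φ).mpr ((hΓ T Q).mpr hQ φ hφ)

/-- Reflexivity is not frame-definable in the Δ language: no set Γ of Δ-formulas
is validated by exactly the reflexive frames. Witness: F1 and F2 validate the
same Δ-formulas, yet F1 is not reflexive while F2 is. -/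
theorem reflexivity_not_delta_definable :
    (¬ ∃ Γ : Set NCLForm, ∀ (S : Type) (R : S → S → Prop),
        (∀ φ ∈ Γ, frameValid R φ) ↔ (∀ s, R s s)) ∧
    (∀ φ : NCLForm, frameValid R1 φ ↔ frameValid R2 φ) ∧
    ¬ (∀ s, R1 s s) ∧ (∀ s, R2 s s) := by
  have reflexive_R2 : ∀ s, R2 s s := fun _ => trivial
  exact ⟨not_frameDefinable_of_frameValid_iff (fun _ R => ∀ s, R s s)
      frameValid_R1_iff_frameValid_R2 not_reflexive_R1 reflexive_R2,
    frameValid_R1_iff_frameValid_R2, not_reflexive_R1, reflexive_R2⟩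
end

section
/- The reduction axiom for announcements and knowing whether is valid: ⟨ψ⟩Δφ ↔ (ψ ∧ (Δ[ψ]φ ∨ Δ[ψ]¬φ)) holds at every world of every Kripke model, where [ψ]χ abbreviates ψ→⟨ψ⟩χ and ⟨ψ⟩χ means ψ holds and χ holds after restricting the model to ψ-worlds. -/
/-!
After announcing `ψ` at a `ψ`-world `s`, the successors of `s` are exactly its `ψ`-successors,
and `[ψ]χ` holds at `t` iff `ψ t` implies `χ` at `t` in the updated model. So both sides say
that the `ψ`-successors of `s` agree on `φ` in the updated model; the extra disjuncts of
`Δ[ψ]φ` and `Δ[ψ]¬φ` (all successors satisfy `ψ ∧ ¬⟨ψ⟩φ`, resp. `ψ ∧ ⟨ψ⟩φ`) are special cases.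
-/

/-- Formulas of public announcement logic with knowing whether:
atoms, ¬, ∧, Δ, and the announcement diamond ⟨ψ⟩χ. -/
inductive PForm where
  | atom : ℕ → PForm
  | neg : PForm → PForm
  | conj : PForm → PForm → PForm
  | delta : PForm → PForm
  | ann : PForm → PForm → PForm

/-- Satisfaction; announcing ψ restricts the accessibility relation to ψ-worlds. -/
def pSat {S : Type*} (V : ℕ → S → Prop) : (S → S → Prop) → PForm → S → Prop
  | _, .atom n, s => V n s
  | R, .neg φ, s => ¬ pSat V R φ s
  | R, .conj φ ψ, s => pSat V R φ s ∧ pSat V R ψ s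
  | R, .delta φ, s =>
      (∀ t, R s t → pSat V R φ t) ∨ (∀ t, R s t → ¬ pSat V R φ t)
  | R, .ann ψ χ, s =>
      pSat V R ψ s ∧
      pSat V (fun a b => R a b ∧ pSat V R ψ a ∧ pSat V R ψ b) χ s

/-- The abbreviation [ψ]χ := ψ → ⟨ψ⟩χ, as a formula (using ¬,∧). -/
def pbox (ψ χ : PForm) : PForm := .neg (.conj ψ (.neg (.ann ψ χ)))

def announceRel {S : Type*} (V : ℕ → S → Prop) (R : S → S → Prop) (ψ : PForm) :
    S → S → Prop :=
  fun a b => R a b ∧ pSat V R ψ a ∧ pSat V R ψ b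

section

variable {S : Type*} {V : ℕ → S → Prop} {R : S → S → Prop} {ψ χ φ : PForm} {s : S}

theorem pSat_pbox {t : S} :
    pSat V R (pbox ψ χ) t ↔ (pSat V R ψ t → pSat V (announceRel V R ψ) χ t) := by
  show ¬(_ ∧ ¬(_ ∧ _)) ↔ _
  exact ⟨fun h hψ => by_contra fun hχ => h ⟨hψ, fun hψχ => hχ hψχ.2⟩,
    fun h ⟨hψ, hn⟩ => hn ⟨hψ, h hψ⟩⟩

theorem pSat_ann_delta :
    pSat V R (.ann ψ (.delta φ)) s ↔ pSat V R ψ s ∧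
      ((∀ t, R s t → pSat V R ψ t → pSat V (announceRel V R ψ) φ t) ∨
        (∀ t, R s t → pSat V R ψ t → ¬ pSat V (announceRel V R ψ) φ t)) := by
  refine and_congr_right fun hψ => ?_
  simp only [pSat, and_imp, true_implies, hψ]
  rfl

theorem pSat_delta_pbox_of_forall
    (h : ∀ t, R s t → pSat V R ψ t → pSat V (announceRel V R ψ) χ t) :
    pSat V R (.delta (pbox ψ χ)) s :=
  .inl fun t hst => pSat_pbox.mpr (h t hst)

theorem agree_of_pSat_delta_pbox (h : pSat V R (.delta (pbox ψ χ)) s) :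
    (∀ t, R s t → pSat V R ψ t → pSat V (announceRel V R ψ) χ t) ∨
      (∀ t, R s t → pSat V R ψ t → ¬ pSat V (announceRel V R ψ) χ t) := by
  rcases h with h | h
  · exact .inl fun t hst => pSat_pbox.mp (h t hst)
  · exact .inr fun t hst hψ hχ => h t hst (pSat_pbox.mpr fun _ => hχ)

end

/-- Reduction axiom: ⟨ψ⟩Δφ ↔ (ψ ∧ (Δ[ψ]φ ∨ Δ[ψ]¬φ)) is valid. -/
theorem ann_delta_reduction {S : Type*} (V : ℕ → S → Prop) (R : S → S → Prop)
    (ψ φ : PForm) (s : S) :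
    pSat V R (.ann ψ (.delta φ)) s ↔
      (pSat V R ψ s ∧
        (pSat V R (.delta (pbox ψ φ)) s ∨ pSat V R (.delta (pbox ψ (.neg φ))) s)) := by
  rw [pSat_ann_delta]
  refine and_congr_right fun _ => ⟨?_, ?_⟩
  · rintro (hφ | hnφ)
    exacts [.inl (pSat_delta_pbox_of_forall hφ), .inr (pSat_delta_pbox_of_forall hnφ)]
  · rintro (h | h)
    · exact agree_of_pSat_delta_pbox h
    · exact (agree_of_pSat_delta_pbox h).symm.imp_left
        fun hφ t hst hψ => not_not.mp (hφ t hst hψ)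
end

section
/- The formula ⟨p⟩Kv c ∧ ⟨q⟩Kv c → ⟨p∨q⟩Kv c is valid over S5 first-order epistemic models with constant domain, where Kv c means all epistemically accessible worlds assign the same value to c, and ⟨φ⟩ is public announcement. -/
/-! Since `s` sees itself, each of the two announcements pins the value of `c` on the accessible
worlds where it holds to the value at `s`; hence every accessible `p ∨ q`-world carries that
value, which is `Kv c` after announcing `p ∨ q`. -/

/-- Kv c holds at s relative to relation `rel`: all accessible worlds
assign the same value to c. -/
def kv {S C D : Type*} (rel : S → S → Prop) (VC : C → S → D) (c : C) (s : S) : Prop :=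
  ∀ t1 t2, rel s t1 → rel s t2 → VC c t1 = VC c t2

theorem kv_of_forall_eq {S C D : Type*} {rel : S → S → Prop} {VC : C → S → D} {c : C} {s : S}
    (d : D) (h : ∀ t, rel s t → VC c t = d) : kv rel VC c s :=
  fun t1 t2 h1 h2 => (h t1 h1).trans (h t2 h2).symm

theorem eq_of_kv_restrict {S C D : Type*} {rel : S → S → Prop} {VC : C → S → D} {p : S → Prop}
    {c : C} {s t : S} (hs : rel s s) (hps : p s) (h : kv (fun a b => rel a b ∧ p a ∧ p b) VC c s)
    (hst : rel s t) (hpt : p t) : VC c t = VC c s :=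
  h t s ⟨hst, hps, hpt⟩ ⟨hs, hps, hps⟩

/-- ⟨p⟩Kv c ∧ ⟨q⟩Kv c → ⟨p∨q⟩Kv c is valid over S5 FO epistemic models with
constant domain; announcing φ restricts the relation to φ-worlds. -/
theorem ann_kv_or {S C D : Type*} (rel : S → S → Prop)
    (hequiv : Equivalence rel) (VC : C → S → D) (p q : S → Prop) (c : C) (s : S)
    (hp : p s ∧ kv (fun a b => rel a b ∧ p a ∧ p b) VC c s)
    (hq : q s ∧ kv (fun a b => rel a b ∧ q a ∧ q b) VC c s) :
    (p s ∨ q s) ∧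
      kv (fun a b => rel a b ∧ (p a ∨ q a) ∧ (p b ∨ q b)) VC c s := by
  refine ⟨Or.inl hp.1, kv_of_forall_eq (VC c s) ?_⟩
  rintro t ⟨hst, -, hpt | hqt⟩
  · exact eq_of_kv_restrict (hequiv.refl s) hp.1 hp.2 hst hpt
  · exact eq_of_kv_restrict (hequiv.refl s) hq.1 hq.2 hst hqt
end

section
/- The axiom Kv^r∨ is valid: over first-order epistemic models with an equivalence epistemic relation, if there is an accessible world satisfying both φ and ψ, and the agent knows the value of c conditional on φ, and knows the value of c conditional on ψ, then the agent knows the value of c conditional on φ∨ψ. -/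
/-- Conditional knowing value Kv(φ,c): any two accessible φ-worlds agree on c. -/
def kvr {S C D : Type*} (rel : S → S → Prop) (VC : C → S → D)
    (φ : S → Prop) (c : C) (s : S) : Prop :=
  ∀ t1 t2, rel s t1 → rel s t2 → φ t1 → φ t2 → VC c t1 = VC c t2

theorem kvr.apply_eq_of_or {S C D : Type*} {rel : S → S → Prop} {VC : C → S → D}
    {φ ψ : S → Prop} {c : C} {s u t : S} (hφ : kvr rel VC φ c s) (hψ : kvr rel VC ψ c s)
    (hu : rel s u) (huφ : φ u) (huψ : ψ u) (ht : rel s t) (htφψ : φ t ∨ ψ t) :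
    VC c t = VC c u :=
  htφψ.elim (fun htφ => hφ t u ht hu htφ huφ) (fun htψ => hψ t u ht hu htψ huψ)

theorem kvr_or_valid_general {S C D : Type*} (rel : S → S → Prop)
    (VC : C → S → D) (φ ψ : S → Prop) (c : C) (s : S)
    (hhat : ∃ t, rel s t ∧ φ t ∧ ψ t)
    (hφ : kvr rel VC φ c s) (hψ : kvr rel VC ψ c s) :
    kvr rel VC (fun t => φ t ∨ ψ t) c s := by
  obtain ⟨u, hu, huφ, huψ⟩ := hhat
  intro t1 t2 h1 h2 hp1 hp2
  rw [hφ.apply_eq_of_or hψ hu huφ huψ h1 hp1, hφ.apply_eq_of_or hψ hu huφ huψ h2 hp2]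

/-- Axiom Kv^r∨: K̂(φ∧ψ) ∧ Kv(φ,c) ∧ Kv(ψ,c) → Kv(φ∨ψ,c) is valid over
FO epistemic models with an equivalence epistemic relation. -/
theorem kvr_or_valid {S C D : Type*} (rel : S → S → Prop)
    (hequiv : Equivalence rel) (VC : C → S → D) (φ ψ : S → Prop) (c : C) (s : S)
    (hhat : ∃ t, rel s t ∧ φ t ∧ ψ t)
    (hφ : kvr rel VC φ c s) (hψ : kvr rel VC ψ c s) :
    kvr rel VC (fun t => φ t ∨ ψ t) c s :=
  kvr_or_valid_general rel VC φ ψ c s hhat hφ hψ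
end

section
/- The distribution axiom DISTKv^r is valid: if K(φ→ψ) holds at s (at all accessible worlds φ→ψ holds) and Kv(ψ,c) holds at s, then Kv(φ,c) holds at s. -/
/-- Axiom DISTKv^r: K(φ→ψ) ∧ Kv(ψ,c) → Kv(φ,c) is valid. -/
theorem distKvr_valid {S C D : Type*} (rel : S → S → Prop) (VC : C → S → D)
    (φ ψ : S → Prop) (c : C) (s : S)
    (hK : ∀ t, rel s t → (φ t → ψ t))
    (hKv : kvr rel VC ψ c s) :
    kvr rel VC φ c s := by
  intro t1 t2 h1 h2 p1 p2
  exact hKv t1 t2 h1 h2 (hK t1 h1 p1) (hK t2 h2 p2)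
end

section
/- The reduction axiom for announcements and conditional knowing value is valid: ⟨φ⟩Kv(ψ,c) ↔ (φ ∧ Kv(⟨φ⟩ψ, c)) holds at every world of every first-order epistemic model. -/
/-- Formulas of epistemic logic with conditional knowing value and announcements:
atoms, ¬, ∧, K, Kv(φ,c), and announcement diamond ⟨φ⟩ψ. Constants come from C. -/
inductive KvForm (C : Type*) where
  | atom : ℕ → KvForm C
  | neg : KvForm C → KvForm C
  | conj : KvForm C → KvForm C → KvForm C
  | know : KvForm C → KvForm C
  | kv : KvForm C → C → KvForm C
  | ann : KvForm C → KvForm C → KvForm C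

/-- Satisfaction on a FO epistemic model (S, D, rel, V, VC); announcing φ
restricts the epistemic relation to φ-worlds (domain and VC unchanged). -/
def kvSat {S C D : Type*} (V : ℕ → S → Prop) (VC : C → S → D) :
    (S → S → Prop) → KvForm C → S → Prop
  | _, .atom n, s => V n s
  | R, .neg φ, s => ¬ kvSat V VC R φ s
  | R, .conj φ ψ, s => kvSat V VC R φ s ∧ kvSat V VC R ψ s
  | R, .know φ, s => ∀ t, R s t → kvSat V VC R φ t
  | R, .kv φ c, s => ∀ t1 t2, R s t1 → R s t2 →
      kvSat V VC R φ t1 → kvSat V VC R φ t2 → VC c t1 = VC c t2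
  | R, .ann φ χ, s =>
      kvSat V VC R φ s ∧
      kvSat V VC (fun a b => R a b ∧ kvSat V VC R φ a ∧ kvSat V VC R φ b) χ s

/-! Kv(ψ,c) says that `c` is constant on the accessible ψ-worlds. Once φ holds at `s`, the worlds
accessible in `M|φ` that satisfy ψ there are exactly the worlds accessible in `M` that satisfy
⟨φ⟩ψ, so both sides of the reduction ask for the same thing. -/

section

variable {S C D : Type*} (V : ℕ → S → Prop) (VC : C → S → D)

/-- The accessibility relation of the updated model `M|φ`. -/
def announce (R : S → S → Prop) (φ : KvForm C) : S → S → Prop :=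
  fun a b => R a b ∧ kvSat V VC R φ a ∧ kvSat V VC R φ b

variable {V VC}

theorem kvSat_ann_iff {R : S → S → Prop} {φ χ : KvForm C} {s : S} :
    kvSat V VC R (.ann φ χ) s ↔ kvSat V VC R φ s ∧ kvSat V VC (announce V VC R φ) χ s :=
  Iff.rfl

theorem kvSat_kv_iff_subsingleton_image {R : S → S → Prop} {ψ : KvForm C} {c : C} {s : S} :
    kvSat V VC R (.kv ψ c) s ↔ (VC c '' {t | R s t ∧ kvSat V VC R ψ t}).Subsingleton := by
  simp only [kvSat, Set.Subsingleton, Set.forall_mem_image, Set.mem_ofPred_eq, and_imp]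
  exact ⟨fun h _ h₁ hψ₁ _ h₂ hψ₂ => h _ _ h₁ h₂ hψ₁ hψ₂, fun h _ _ h₁ h₂ hψ₁ hψ₂ => h h₁ hψ₁ h₂ hψ₂⟩

theorem setOf_announce_accessible {R : S → S → Prop} {φ ψ : KvForm C} {s : S}
    (hφ : kvSat V VC R φ s) :
    {t | announce V VC R φ s t ∧ kvSat V VC (announce V VC R φ) ψ t} =
      {t | R s t ∧ kvSat V VC R (.ann φ ψ) t} := by
  ext t
  simp only [Set.mem_ofPred_eq, announce, kvSat_ann_iff, hφ, true_and, and_assoc]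

end

/-- Reduction axiom: ⟨φ⟩Kv(ψ,c) ↔ (φ ∧ Kv(⟨φ⟩ψ, c)) is valid. -/
theorem ann_kv_reduction {S C D : Type*} (V : ℕ → S → Prop) (VC : C → S → D)
    (R : S → S → Prop) (φ ψ : KvForm C) (c : C) (s : S) :
    kvSat V VC R (.ann φ (.kv ψ c)) s ↔
      (kvSat V VC R φ s ∧ kvSat V VC R (.kv (.ann φ ψ) c) s) := by
  rw [kvSat_ann_iff, kvSat_kv_iff_subsingleton_image, kvSat_kv_iff_subsingleton_image]
  exact and_congr_right fun hφ => by rw [setOf_announce_accessible hφ]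
end

section
/- In the ternary-relation semantics for knowing value, the binary diamond is definable from the unary one: M,s ⊨ ◇^c(φ,ψ) iff M,s satisfies the disjunction of (◇^c φ ∧ ◇ψ), (◇^c ψ ∧ ◇φ), and (◇φ ∧ ◇ψ ∧ ¬◇^c φ ∧ ¬◇^c ψ ∧ ◇^c(φ∨ψ)), where ◇^c χ abbreviates ◇^c(χ,χ), provided the ternary relation R^c satisfies symmetry, inclusion in the binary relation, and the anti-Euclidean property. -/
/-!
Anti-Euclideanity lets every successor of `s` be paired with one of the two points of any
`Rc s`-pair, so `◇^c φ` together with `◇ ψ` already yields `◇^c(φ, ψ)`. In the remaining case a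
pair witnessing `◇^c(φ ∨ ψ)` is neither a `φφ`- nor a `ψψ`-pair, hence, up to symmetry, a
`φψ`-pair.
-/

/-- Unary diamond: some →-successor satisfies φ. -/
def dia {S : Type*} (r : S → S → Prop) (φ : S → Prop) (s : S) : Prop :=
  ∃ t, r s t ∧ φ t

/-- Binary value-diamond: there are u,v with R^c s u v, u ⊨ φ, v ⊨ ψ. -/
def diaC {S : Type*} (Rc : S → S → S → Prop) (φ ψ : S → Prop) (s : S) : Prop :=
  ∃ u v, Rc s u v ∧ φ u ∧ ψ v

section

variable {S : Type*} {r : S → S → Prop} {Rc : S → S → S → Prop} {φ φ' ψ ψ' : S → Prop} {s : S}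

theorem diaC_comm (hsym : ∀ s u v, Rc s u v ↔ Rc s v u) :
    diaC Rc φ ψ s ↔ diaC Rc ψ φ s :=
  ⟨fun ⟨u, v, huv, hu, hv⟩ => ⟨v, u, (hsym s u v).1 huv, hv, hu⟩,
   fun ⟨v, u, hvu, hv, hu⟩ => ⟨u, v, (hsym s v u).1 hvu, hu, hv⟩⟩

theorem diaC_or_left :
    diaC Rc (fun t => φ t ∨ φ' t) ψ s ↔ diaC Rc φ ψ s ∨ diaC Rc φ' ψ s := by
  simp only [diaC, or_and_right, and_or_left, exists_or]

theorem diaC_or_right :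
    diaC Rc φ (fun t => ψ t ∨ ψ' t) s ↔ diaC Rc φ ψ s ∨ diaC Rc φ ψ' s := by
  simp only [diaC, and_or_left, exists_or]

theorem dia_left_of_diaC (hincl : ∀ s u v, Rc s u v → r s u ∧ r s v) :
    diaC Rc φ ψ s → dia r φ s :=
  fun ⟨u, v, huv, hu, _⟩ => ⟨u, (hincl s u v huv).1, hu⟩

theorem dia_right_of_diaC (hincl : ∀ s u v, Rc s u v → r s u ∧ r s v) :
    diaC Rc φ ψ s → dia r ψ s :=
  fun ⟨u, v, huv, _, hv⟩ => ⟨v, (hincl s u v huv).2, hv⟩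

theorem diaC_of_diaC_self_of_dia (hae : ∀ s t1 t2 u, Rc s t1 t2 → r s u → Rc s u t1 ∨ Rc s u t2)
    (hφ : diaC Rc φ φ s) (hψ : dia r ψ s) : diaC Rc ψ φ s := by
  obtain ⟨u, u', huu', hu, hu'⟩ := hφ
  obtain ⟨t, hst, ht⟩ := hψ
  rcases hae s u u' t huu' hst with htu | htu'
  · exact ⟨t, u, htu, ht, hu⟩
  · exact ⟨t, u', htu', ht, hu'⟩

end

/-- The binary diamond is definable from the unary one (◇^c χ := ◇^c(χ,χ)),
given symmetry, inclusion, and the anti-Euclidean property of R^c. -/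
theorem binary_diamond_definable {S : Type*} (r : S → S → Prop)
    (Rc : S → S → S → Prop)
    (hsym : ∀ s u v, Rc s u v ↔ Rc s v u)
    (hincl : ∀ s u v, Rc s u v → r s u ∧ r s v)
    (hae : ∀ s t1 t2 u, Rc s t1 t2 → r s u → Rc s u t1 ∨ Rc s u t2)
    (φ ψ : S → Prop) (s : S) :
    diaC Rc φ ψ s ↔
      ((diaC Rc φ φ s ∧ dia r ψ s) ∨
       (diaC Rc ψ ψ s ∧ dia r φ s) ∨
       (dia r φ s ∧ dia r ψ s ∧ ¬ diaC Rc φ φ s ∧ ¬ diaC Rc ψ ψ s ∧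
         diaC Rc (fun t => φ t ∨ ψ t) (fun t => φ t ∨ ψ t) s)) := by
  have hcomm : diaC Rc ψ φ s ↔ diaC Rc φ ψ s := diaC_comm hsym
  constructor
  · intro h
    have hφ : dia r φ s := dia_left_of_diaC hincl h
    have hψ : dia r ψ s := dia_right_of_diaC hincl h
    by_cases hφφ : diaC Rc φ φ s
    · exact .inl ⟨hφφ, hψ⟩
    by_cases hψψ : diaC Rc ψ ψ s
    · exact .inr (.inl ⟨hψψ, hφ⟩)
    exact .inr (.inr ⟨hφ, hψ, hφφ, hψψ, diaC_or_left.2 (.inl (diaC_or_right.2 (.inr h)))⟩)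
  · rintro (⟨hφφ, hψ⟩ | ⟨hψψ, hφ⟩ | ⟨-, -, hφφ, hψψ, h⟩)
    · exact hcomm.1 (diaC_of_diaC_self_of_dia hae hφφ hψ)
    · exact diaC_of_diaC_self_of_dia hae hψψ hφ
    · rw [diaC_or_left, diaC_or_right, diaC_or_right, hcomm] at h
      tauto
end

section
/- The composition axiom COMPKh is valid over all labeled transition system models: if Kh(p,r) and Kh(r,q) hold then Kh(p,q) holds, where Kh(ψ,φ) means there exists an action sequence σ such that from every ψ-world, σ is strongly executable and every σ-execution ends in a φ-world. -/
variable {S A : Type*}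

/-- Execution of an action sequence: s →_σ t. -/
def reach (R : A → S → S → Prop) : List A → S → S → Prop
  | [], s, t => s = t
  | a :: σ, s, t => ∃ u, R a s u ∧ reach R σ u t

/-- σ is strongly executable at s: at every stage of executing σ the next
action has a successor. -/
def stronglyExec (R : A → S → S → Prop) : List A → S → Prop
  | [], _ => True
  | a :: σ, s => (∃ u, R a s u) ∧ ∀ u, R a s u → stronglyExec R σ u

/-- Kh(ψ,φ): there is an action sequence σ such that from every ψ-world,
σ is strongly executable and every σ-execution ends in a φ-world. -/
def kh (R : A → S → S → Prop) (ψ φ : S → Prop) : Prop :=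
  ∃ σ : List A, ∀ s', ψ s' →
    stronglyExec R σ s' ∧ ∀ t, reach R σ s' t → φ t

section Append

variable (R : A → S → S → Prop)

theorem reach_append (σ τ : List A) (s t : S) :
    reach R (σ ++ τ) s t ↔ ∃ u, reach R σ s u ∧ reach R τ u t := by
  induction σ generalizing s with
  | nil => simp [reach]
  | cons a σ ih =>
    simp only [List.cons_append, reach, ih]
    constructor
    · rintro ⟨u, hsu, v, huv, hvt⟩
      exact ⟨v, ⟨u, hsu, huv⟩, hvt⟩
    · rintro ⟨v, ⟨u, hsu, huv⟩, hvt⟩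
      exact ⟨u, hsu, v, huv, hvt⟩

theorem stronglyExec_append {σ τ : List A} {s : S} (hσ : stronglyExec R σ s)
    (hτ : ∀ u, reach R σ s u → stronglyExec R τ u) :
    stronglyExec R (σ ++ τ) s := by
  induction σ generalizing s with
  | nil => exact hτ s rfl
  | cons a σ ih =>
    obtain ⟨⟨u, hsu⟩, hσ_succ⟩ := hσ
    exact ⟨⟨u, hsu⟩, fun v hsv => ih (hσ_succ v hsv) fun w hvw => hτ w ⟨v, hsv, hvw⟩⟩

end Append

/-- Axiom COMPKh: Kh(p,r) ∧ Kh(r,q) → Kh(p,q) is valid. -/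
theorem compKh_valid (R : A → S → S → Prop) (p r q : S → Prop)
    (h1 : kh R p r) (h2 : kh R r q) : kh R p q := by
  obtain ⟨σ, hσ⟩ := h1
  obtain ⟨τ, hτ⟩ := h2
  refine ⟨σ ++ τ, fun s hs => ⟨?_, fun t hst => ?_⟩⟩
  · exact stronglyExec_append R (hσ s hs).1 fun u hsu => (hτ u ((hσ s hs).2 u hsu)).1
  · obtain ⟨u, hsu, hut⟩ := (reach_append R σ τ s t).1 hst
    exact (hτ u ((hσ s hs).2 u hsu)).2 t hut
end
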